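/- arXiv:2110.06315 — 3 statements merged into one kernel-verified Lean document; each statement's English description precedes it below -/
import Mathlib

section
/- Every non-repetitive simplex-wise zigzag filtration F: ∅ = K_0 ↔ K_1 ↔ ⋯ ↔ K_m = ∅ can be transformed into an up-down filtration by a finite sequence of inward switches, where each inward switch replaces a consecutive pair (delete τ, then add σ) with (add σ, then delete τ); equivalently, the sequence of operations of F, viewed as a word in additions and deletions, can be sorted so that all additions precede all deletions by adjacent transpositions that each swap a deletion immediately followed by an addition. -/
/-- An operation in a simplex-wise zigzag filtration: `(true, σ)` is the addition
of the simplex `σ`, and `(false, σ)` is its deletion. -/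
abbrev Op (V : Type) := Bool × Finset V

/-- A word of operations is non-repetitive if no simplex is added again
after having been deleted. -/
def NonRepetitive {V : Type} (ops : List (Op V)) : Prop :=
  ∀ i j : Fin ops.length, (i : ℕ) < (j : ℕ) →
    ∀ σ : Finset V, ops.get i = (false, σ) → ops.get j ≠ (true, σ)

/-- A word of operations is up-down if all additions precede all deletions. -/
def IsUpDown {V : Type} (ops : List (Op V)) : Prop :=
  ∀ i j : Fin ops.length, (i : ℕ) < (j : ℕ) →
    (ops.get i).1 = false → (ops.get j).1 = false

/-- One inward switch (adjacent transposition): replace a consecutive pair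
(delete `τ`, then add `σ`) by (add `σ`, then delete `τ`);
this is valid only when `σ ≠ τ`. -/
def InwardSwitch {V : Type} (l l' : List (Op V)) : Prop :=
  ∃ (pre suf : List (Op V)) (σ τ : Finset V), σ ≠ τ ∧
    l = pre ++ (false, τ) :: (true, σ) :: suf ∧
    l' = pre ++ (true, σ) :: (false, τ) :: suf

/-!
A deletion followed by additions can be switched past all of them unless one of them re-adds
the deleted simplex, which non-repetitiveness forbids. So, by induction on the word, each
deletion can be pushed past all later additions, and the word is moved to its stable
partition: the additions in their order, followed by the deletions in their order.
-/

section

variable {V : Type}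

lemma nonRepetitive_iff_pairwise (ops : List (Op V)) :
    NonRepetitive ops ↔ ops.Pairwise (fun a b => ∀ σ, a = (false, σ) → b ≠ (true, σ)) := by
  rw [List.pairwise_iff_get]
  rfl

lemma NonRepetitive.of_cons {a : Op V} {ops : List (Op V)} (h : NonRepetitive (a :: ops)) :
    NonRepetitive ops :=
  (nonRepetitive_iff_pairwise ops).2 ((nonRepetitive_iff_pairwise _).1 h).of_cons

lemma NonRepetitive.not_mem_of_cons_deletion {τ : Finset V} {ops : List (Op V)}
    (h : NonRepetitive ((false, τ) :: ops)) : (true, τ) ∉ ops := fun hmem =>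
  (List.rel_of_pairwise_cons ((nonRepetitive_iff_pairwise _).1 h) hmem) τ rfl rfl

lemma isUpDown_iff_pairwise (ops : List (Op V)) :
    IsUpDown ops ↔ ops.Pairwise (fun a b => a.1 = false → b.1 = false) := by
  rw [List.pairwise_iff_get]
  rfl

def upDownSort (ops : List (Op V)) : List (Op V) :=
  ops.filter (·.1) ++ ops.filter (!·.1)

lemma isUpDown_upDownSort (ops : List (Op V)) : IsUpDown (upDownSort ops) := by
  rw [isUpDown_iff_pairwise, upDownSort, List.pairwise_append]
  refine ⟨List.pairwise_of_forall_mem_list ?_, List.pairwise_of_forall_mem_list ?_, ?_⟩ <;>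
    simp +contextual [List.mem_filter]

lemma InwardSwitch.cons {l l' : List (Op V)} (hs : InwardSwitch l l') (a : Op V) :
    InwardSwitch (a :: l) (a :: l') := by
  obtain ⟨pre, suf, σ, τ, hne, rfl, rfl⟩ := hs
  exact ⟨a :: pre, suf, σ, τ, hne, rfl, rfl⟩

lemma reflTransGen_inwardSwitch_cons {l l' : List (Op V)}
    (h : Relation.ReflTransGen InwardSwitch l l') (a : Op V) :
    Relation.ReflTransGen InwardSwitch (a :: l) (a :: l') :=
  h.lift (a :: ·) fun _ _ hs => hs.cons a

lemma reflTransGen_inwardSwitch_deletion_past_additions (τ : Finset V) :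
    ∀ (adds dels : List (Op V)), (∀ a ∈ adds, a.1 = true) → (true, τ) ∉ adds →
      Relation.ReflTransGen InwardSwitch ((false, τ) :: (adds ++ dels))
        (adds ++ (false, τ) :: dels)
  | [], _, _, _ => .refl
  | (b, σ) :: adds, dels, hadd, hτ => by
    obtain rfl : b = true := hadd _ List.mem_cons_self
    have hστ : σ ≠ τ := fun h => hτ (h ▸ List.mem_cons_self)
    have hswitch : InwardSwitch ((false, τ) :: (true, σ) :: (adds ++ dels))
        ((true, σ) :: (false, τ) :: (adds ++ dels)) :=
      ⟨[], adds ++ dels, σ, τ, hστ, rfl, rfl⟩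
    exact .head hswitch <| reflTransGen_inwardSwitch_cons
      (reflTransGen_inwardSwitch_deletion_past_additions τ adds dels
        (fun a ha => hadd a (List.mem_cons_of_mem _ ha))
        (fun h => hτ (List.mem_cons_of_mem _ h))) _

lemma reflTransGen_inwardSwitch_upDownSort :
    ∀ {ops : List (Op V)}, NonRepetitive ops →
      Relation.ReflTransGen InwardSwitch ops (upDownSort ops)
  | [], _ => .refl
  | (true, σ) :: ops, h => by
    simpa [upDownSort] using reflTransGen_inwardSwitch_cons
      (reflTransGen_inwardSwitch_upDownSort h.of_cons) (true, σ)
  | (false, τ) :: ops, h => by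
    have hτ : (true, τ) ∉ ops.filter (·.1) := fun hmem =>
      h.not_mem_of_cons_deletion (List.mem_of_mem_filter hmem)
    simpa [upDownSort] using (reflTransGen_inwardSwitch_cons
      (reflTransGen_inwardSwitch_upDownSort h.of_cons) (false, τ)).trans
      (reflTransGen_inwardSwitch_deletion_past_additions τ _ _
        (fun a ha => (List.mem_filter.1 ha).2) hτ)

end

/-- Every non-repetitive simplex-wise zigzag filtration, viewed as a word of
additions and deletions, can be sorted into an up-down word (all additions
before all deletions) by a finite sequence of inward switches, each swapping a
deletion immediately followed by an addition (of a different simplex). -/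
theorem nonrepetitive_sorts_to_updown {V : Type} (ops : List (Op V))
    (h : NonRepetitive ops) :
    ∃ ops' : List (Op V), Relation.ReflTransGen InwardSwitch ops ops' ∧ IsUpDown ops' :=
  ⟨upDownSort ops, reflTransGen_inwardSwitch_upDownSort h, isUpDown_upDownSort ops⟩
end

section
/- The up-down filtration obtained from a non-repetitive filtration F by listing all additions of F first (in their order of occurrence in F) and then all deletions (in their order of occurrence in F) is a well-defined simplex-wise filtration, i.e., at each addition step all proper faces of the added simplex are present, and at each deletion step the deleted simplex is maximal. -/
/-! In `F` every simplex of `K` lives on a single interval of time, so it is added exactly once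
and deleted exactly once; hence both halves of `U` are duplicate-free lists of `K`. A proper face
of a simplex `σ` is present when `σ` is added in `F`, so it was added earlier in `F`, hence earlier
in `U`. Dually, if a coface `s ⊋ σ` were still present when `σ` is deleted in `U`, then `s` is
deleted after `σ` in `F`, so at that later time `σ ⊆ s` would be present again in `F`,
contradicting non-repetitivity. -/

/-- An (abstract) simplicial complex: a finite family of finite nonempty
vertex sets closed under taking nonempty subsets. -/
def IsComplex {V : Type} [DecidableEq V] (K : Finset (Finset V)) : Prop :=
  ∀ s ∈ K, s.Nonempty ∧ ∀ t ⊆ s, t.Nonempty → t ∈ K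

theorem List.Pairwise.mem_take_iff_lt {α : Type*} [Preorder α] {L : List α}
    (hL : L.Pairwise (· < ·)) {l : ℕ} (hl : l < L.length) {b : α} :
    b ∈ L.take l ↔ b ∈ L ∧ b < L[l] := by
  have hsplit := L.take_append_drop l
  rw [List.drop_eq_getElem_cons hl] at hsplit
  rw [← hsplit, List.pairwise_append, List.pairwise_cons] at hL
  refine ⟨fun hb => ⟨List.mem_of_mem_take hb, hL.2.2 b hb _ List.mem_cons_self⟩, ?_⟩
  rintro ⟨hbL, hlt⟩
  rw [← hsplit, List.mem_append, List.mem_cons] at hbL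
  rcases hbL with hb | rfl | hb
  · exact hb
  · exact absurd hlt (lt_irrefl _)
  · exact absurd hlt (hL.2.1.1 b hb).asymm

theorem List.toFinset_map_take_add_one {α β : Type*} [DecidableEq β] (f : α → β) (L : List α)
    {l : ℕ} (hl : l < L.length) :
    ((L.take (l + 1)).map f).toFinset = insert (f L[l]) ((L.take l).map f).toFinset := by
  rw [← L.take_concat_get' l hl, List.map_append, List.toFinset_append, Finset.union_comm]
  rfl

section Zigzag

variable {V : Type} [DecidableEq V] {m : ℕ} {Ks : ℕ → Finset (Finset V)} {adds : ℕ → Bool}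
  {σs : ℕ → Finset V}

def IsZigzagStep (Ks : ℕ → Finset (Finset V)) (adds : ℕ → Bool) (σs : ℕ → Finset V) (i : ℕ) :
    Prop :=
  adds i = true ∧ σs i ∉ Ks i ∧ Ks (i + 1) = insert (σs i) (Ks i) ∨
    adds i = false ∧ σs i ∈ Ks i ∧ Ks (i + 1) = (Ks i).erase (σs i)

def IsNonRepetitive (m : ℕ) (Ks : ℕ → Finset (Finset V)) : Prop :=
  ∀ (σ : Finset V) (i j l : ℕ), i ≤ j → j ≤ l → l ≤ m → σ ∈ Ks i → σ ∉ Ks j → σ ∉ Ks l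

def additions (m : ℕ) (adds : ℕ → Bool) : List ℕ := (List.range m).filter fun i => adds i = true

def deletions (m : ℕ) (adds : ℕ → Bool) : List ℕ := (List.range m).filter fun i => adds i = false

theorem mem_additions {a : ℕ} : a ∈ additions m adds ↔ a < m ∧ adds a = true := by
  simp [additions]

theorem mem_deletions {d : ℕ} : d ∈ deletions m adds ↔ d < m ∧ adds d = false := by
  simp [deletions]

theorem pairwise_lt_additions : (additions m adds).Pairwise (· < ·) :=
  List.pairwise_lt_range.filter _

theorem pairwise_lt_deletions : (deletions m adds).Pairwise (· < ·) :=
  List.pairwise_lt_range.filter _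

theorem IsZigzagStep.of_addition {i : ℕ} (h : IsZigzagStep Ks adds σs i) (ha : adds i = true) :
    σs i ∉ Ks i ∧ Ks (i + 1) = insert (σs i) (Ks i) :=
  (h.resolve_right fun h' => by simp [ha] at h').2

theorem IsZigzagStep.of_deletion {i : ℕ} (h : IsZigzagStep Ks adds σs i) (hd : adds i = false) :
    σs i ∈ Ks i ∧ Ks (i + 1) = (Ks i).erase (σs i) :=
  (h.resolve_left fun h' => by simp [hd] at h').2

theorem mem_succ_of_mem_additions (hstep : ∀ i < m, IsZigzagStep Ks adds σs i) {a : ℕ}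
    (ha : a ∈ additions m adds) : σs a ∈ Ks (a + 1) := by
  obtain ⟨ham, hadd⟩ := mem_additions.1 ha
  rw [((hstep a ham).of_addition hadd).2]
  exact Finset.mem_insert_self _ _

theorem mem_of_mem_deletions (hstep : ∀ i < m, IsZigzagStep Ks adds σs i) {d : ℕ}
    (hd : d ∈ deletions m adds) : σs d ∈ Ks d :=
  let ⟨hdm, hdel⟩ := mem_deletions.1 hd
  ((hstep d hdm).of_deletion hdel).1

theorem notMem_of_le_of_mem_additions (hstep : ∀ i < m, IsZigzagStep Ks adds σs i)
    (hnonrep : IsNonRepetitive m Ks) {a e : ℕ} (ha : a ∈ additions m adds) (hea : e ≤ a) :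
    σs a ∉ Ks e := fun he =>
  let ⟨ham, hadd⟩ := mem_additions.1 ha
  hnonrep _ e a (a + 1) hea a.le_succ ham he ((hstep a ham).of_addition hadd).1
    (mem_succ_of_mem_additions hstep ha)

theorem notMem_of_lt_of_mem_deletions (hstep : ∀ i < m, IsZigzagStep Ks adds σs i)
    (hnonrep : IsNonRepetitive m Ks) {d e : ℕ} (hd : d ∈ deletions m adds) (hde : d < e)
    (hem : e ≤ m) : σs d ∉ Ks e := by
  obtain ⟨hdm, hdel⟩ := mem_deletions.1 hd
  refine hnonrep _ d (d + 1) e d.le_succ hde hem (mem_of_mem_deletions hstep hd) ?_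
  rw [((hstep d hdm).of_deletion hdel).2]
  exact Finset.notMem_erase _ _

theorem exists_mem_additions_of_mem (h0 : Ks 0 = ∅) (hstep : ∀ i < m, IsZigzagStep Ks adds σs i)
    {i : ℕ} (him : i ≤ m) {σ : Finset V} (hσ : σ ∈ Ks i) :
    ∃ a ∈ additions m adds, a < i ∧ σs a = σ := by
  induction i generalizing σ with
  | zero => simp [h0] at hσ
  | succ n ih =>
    have hnm : n < m := him
    rcases hstep n hnm with ⟨hadd, -, heq⟩ | ⟨-, -, heq⟩
    · rw [heq, Finset.mem_insert] at hσ
      rcases hσ with rfl | hσ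
      · exact ⟨n, mem_additions.2 ⟨hnm, hadd⟩, n.lt_succ_self, rfl⟩
      · obtain ⟨a, ha, han, rfl⟩ := ih hnm.le hσ
        exact ⟨a, ha, han.trans n.lt_succ_self, rfl⟩
    · rw [heq] at hσ
      obtain ⟨a, ha, han, rfl⟩ := ih hnm.le (Finset.mem_of_mem_erase hσ)
      exact ⟨a, ha, han.trans n.lt_succ_self, rfl⟩

theorem exists_mem_deletions_of_mem (hm : Ks m = ∅) (hstep : ∀ i < m, IsZigzagStep Ks adds σs i)
    {i : ℕ} (him : i ≤ m) {σ : Finset V} (hσ : σ ∈ Ks i) :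
    ∃ d ∈ deletions m adds, i ≤ d ∧ σs d = σ := by
  induction him using Nat.decreasingInduction generalizing σ with
  | self => simp [hm] at hσ
  | of_succ k hkm ih =>
    have later : σ ∈ Ks (k + 1) → ∃ d ∈ deletions m adds, k ≤ d ∧ σs d = σ := fun h =>
      let ⟨d, hd, hkd, hσd⟩ := ih h
      ⟨d, hd, k.le_succ.trans hkd, hσd⟩
    rcases hstep k hkm with ⟨-, -, heq⟩ | ⟨hdel, -, heq⟩
    · exact later (heq ▸ Finset.mem_insert_of_mem hσ)
    · by_cases hσk : σ = σs k
      · exact ⟨k, mem_deletions.2 ⟨hkm, hdel⟩, le_rfl, hσk.symm⟩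
      · exact later (heq ▸ Finset.mem_erase.2 ⟨hσk, hσ⟩)

theorem toFinset_map_additions (h0 : Ks 0 = ∅) (hstep : ∀ i < m, IsZigzagStep Ks adds σs i)
    {K : Finset (Finset V)} (hK : ∀ σ : Finset V, σ ∈ K ↔ ∃ i ≤ m, σ ∈ Ks i) :
    ((additions m adds).map σs).toFinset = K := by
  ext σ
  simp only [List.mem_toFinset, List.mem_map, hK]
  constructor
  · rintro ⟨a, ha, rfl⟩
    exact ⟨a + 1, (mem_additions.1 ha).1, mem_succ_of_mem_additions hstep ha⟩
  · rintro ⟨i, him, hσ⟩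
    obtain ⟨a, ha, -, hσa⟩ := exists_mem_additions_of_mem h0 hstep him hσ
    exact ⟨a, ha, hσa⟩

theorem toFinset_map_deletions (hm : Ks m = ∅) (hstep : ∀ i < m, IsZigzagStep Ks adds σs i)
    {K : Finset (Finset V)} (hK : ∀ σ : Finset V, σ ∈ K ↔ ∃ i ≤ m, σ ∈ Ks i) :
    ((deletions m adds).map σs).toFinset = K := by
  ext σ
  simp only [List.mem_toFinset, List.mem_map, hK]
  constructor
  · rintro ⟨d, hd, rfl⟩
    exact ⟨d, (mem_deletions.1 hd).1.le, mem_of_mem_deletions hstep hd⟩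
  · rintro ⟨i, him, hσ⟩
    obtain ⟨d, hd, -, hσd⟩ := exists_mem_deletions_of_mem hm hstep him hσ
    exact ⟨d, hd, hσd⟩

theorem notMem_toFinset_map_take_additions (hstep : ∀ i < m, IsZigzagStep Ks adds σs i)
    (hnonrep : IsNonRepetitive m Ks) {l : ℕ} (hl : l < (additions m adds).length) :
    σs (additions m adds)[l] ∉ (((additions m adds).take l).map σs).toFinset := by
  simp only [List.mem_toFinset, List.mem_map, pairwise_lt_additions.mem_take_iff_lt hl]
  rintro ⟨b, ⟨hb, hbl⟩, hσb⟩
  exact notMem_of_le_of_mem_additions hstep hnonrep (List.getElem_mem hl) hbl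
    (hσb ▸ mem_succ_of_mem_additions hstep hb)

theorem mem_toFinset_map_take_additions_of_ssubset (hcplx : ∀ i ≤ m, IsComplex (Ks i))
    (h0 : Ks 0 = ∅) (hstep : ∀ i < m, IsZigzagStep Ks adds σs i) {l : ℕ}
    (hl : l < (additions m adds).length) {t : Finset V} (hts : t ⊆ σs (additions m adds)[l])
    (hne : t ≠ σs (additions m adds)[l]) (ht : t.Nonempty) :
    t ∈ (((additions m adds).take l).map σs).toFinset := by
  set a := (additions m adds)[l]
  have ha : a ∈ additions m adds := List.getElem_mem hl
  obtain ⟨ham, hadd⟩ := mem_additions.1 ha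
  have ht_succ : t ∈ Ks (a + 1) :=
    (hcplx (a + 1) ham (σs a) (mem_succ_of_mem_additions hstep ha)).2 t hts ht
  rw [((hstep a ham).of_addition hadd).2, Finset.mem_insert] at ht_succ
  obtain ⟨b, hb, hba, rfl⟩ :=
    exists_mem_additions_of_mem h0 hstep ham.le (ht_succ.resolve_left hne)
  simp only [List.mem_toFinset, List.mem_map, pairwise_lt_additions.mem_take_iff_lt hl]
  exact ⟨b, ⟨hb, hba⟩, rfl⟩

theorem mem_sdiff_toFinset_map_take_deletions (hstep : ∀ i < m, IsZigzagStep Ks adds σs i)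
    (hnonrep : IsNonRepetitive m Ks) {K : Finset (Finset V)}
    (hK : ∀ σ : Finset V, σ ∈ K ↔ ∃ i ≤ m, σ ∈ Ks i) {l : ℕ}
    (hl : l < (deletions m adds).length) :
    σs (deletions m adds)[l] ∈ K \ (((deletions m adds).take l).map σs).toFinset := by
  set d := (deletions m adds)[l]
  have hd : d ∈ deletions m adds := List.getElem_mem hl
  simp only [Finset.mem_sdiff, List.mem_toFinset, List.mem_map,
    pairwise_lt_deletions.mem_take_iff_lt hl, hK]
  refine ⟨⟨d, (mem_deletions.1 hd).1.le, mem_of_mem_deletions hstep hd⟩, ?_⟩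
  rintro ⟨b, ⟨hb, hbd⟩, hσb⟩
  exact notMem_of_lt_of_mem_deletions hstep hnonrep hb hbd (mem_deletions.1 hd).1.le
    (hσb ▸ mem_of_mem_deletions hstep hd)

theorem eq_of_mem_sdiff_toFinset_map_take_deletions (hcplx : ∀ i ≤ m, IsComplex (Ks i))
    (hm : Ks m = ∅) (hstep : ∀ i < m, IsZigzagStep Ks adds σs i) (hnonrep : IsNonRepetitive m Ks)
    {K : Finset (Finset V)} (hK : ∀ σ : Finset V, σ ∈ K ↔ ∃ i ≤ m, σ ∈ Ks i) {l : ℕ}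
    (hl : l < (deletions m adds).length) {s : Finset V}
    (hs : s ∈ K \ (((deletions m adds).take l).map σs).toFinset)
    (hσs : σs (deletions m adds)[l] ⊆ s) : s = σs (deletions m adds)[l] := by
  set d := (deletions m adds)[l]
  have hd : d ∈ deletions m adds := List.getElem_mem hl
  simp only [Finset.mem_sdiff, List.mem_toFinset, List.mem_map,
    pairwise_lt_deletions.mem_take_iff_lt hl, hK] at hs
  obtain ⟨⟨i, him, hsi⟩, hs_later⟩ := hs
  obtain ⟨e, he, -, rfl⟩ := exists_mem_deletions_of_mem hm hstep him hsi
  have hde : d ≤ e := not_lt.1 fun hed => hs_later ⟨e, ⟨he, hed⟩, rfl⟩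
  rcases hde.eq_or_lt with rfl | hde
  · rfl
  have hσ_ne : (σs d).Nonempty :=
    (hcplx d (mem_deletions.1 hd).1.le _ (mem_of_mem_deletions hstep hd)).1
  have hem : e ≤ m := (mem_deletions.1 he).1.le
  exact absurd ((hcplx e hem _ (mem_of_mem_deletions hstep he)).2 _ hσs hσ_ne)
    (notMem_of_lt_of_mem_deletions hstep hnonrep hd hde hem)

end Zigzag

/-- Given a non-repetitive simplex-wise zigzag filtration `F` of total complex
`K`, the up-down filtration `U` obtained by performing all additions of `F`
first (in their order in `F`), and then all deletions of `F` (in their order in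
`F`), is a well-defined simplex-wise filtration: at each addition step all
proper faces of the added simplex are already present (and the simplex itself
is not), and at each deletion step the deleted simplex is present and maximal.
Moreover the ascending half ends at `K` and the descending half ends at `∅`. -/
theorem updown_filtration_well_defined {V : Type} [DecidableEq V]
    (m : ℕ) (Ks : ℕ → Finset (Finset V)) (adds : ℕ → Bool) (σs : ℕ → Finset V)
    (K : Finset (Finset V))
    (hcplx : ∀ i ≤ m, IsComplex (Ks i))
    (h0 : Ks 0 = ∅) (hm : Ks m = ∅)
    (hstep : ∀ i < m,
      (adds i = true ∧ σs i ∉ Ks i ∧ Ks (i + 1) = insert (σs i) (Ks i)) ∨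
      (adds i = false ∧ σs i ∈ Ks i ∧ Ks (i + 1) = (Ks i).erase (σs i)))
    (hnonrep : ∀ (σ : Finset V) (i j l : ℕ), i ≤ j → j ≤ l → l ≤ m →
      σ ∈ Ks i → σ ∉ Ks j → σ ∉ Ks l)
    (hK : ∀ σ : Finset V, σ ∈ K ↔ ∃ i ≤ m, σ ∈ Ks i)
    -- `A` (resp. `D`) lists the addition (resp. deletion) steps of `F` in order
    (A D : List ℕ)
    (hA : A = (List.range m).filter fun i => adds i = true)
    (hD : D = (List.range m).filter fun i => adds i = false)
    -- the complexes of the ascending half of `U`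
    (Us : ℕ → Finset (Finset V))
    (hUs : ∀ l, Us l = ((A.take l).map σs).toFinset)
    -- the complexes of the descending half of `U`
    (Ws : ℕ → Finset (Finset V))
    (hWs : ∀ l, Ws l = K \ ((D.take l).map σs).toFinset) :
    Us A.length = K ∧ Ws D.length = ∅ ∧
    (∀ l (hl : l < A.length),
      σs (A.get ⟨l, hl⟩) ∉ Us l ∧
      Us (l + 1) = insert (σs (A.get ⟨l, hl⟩)) (Us l) ∧
      ∀ t ⊆ σs (A.get ⟨l, hl⟩), t ≠ σs (A.get ⟨l, hl⟩) → t.Nonempty → t ∈ Us l) ∧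
    (∀ l (hl : l < D.length),
      σs (D.get ⟨l, hl⟩) ∈ Ws l ∧
      Ws (l + 1) = (Ws l).erase (σs (D.get ⟨l, hl⟩)) ∧
      ∀ s ∈ Ws l, σs (D.get ⟨l, hl⟩) ⊆ s → s = σs (D.get ⟨l, hl⟩)) := by
  obtain rfl : A = additions m adds := hA
  obtain rfl : D = deletions m adds := hD
  simp only [List.get_eq_getElem, hUs, hWs]
  refine ⟨?_, ?_, fun l hl => ⟨?_, ?_, ?_⟩, fun l hl => ⟨?_, ?_, ?_⟩⟩
  · rw [List.take_length, toFinset_map_additions h0 hstep hK]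
  · rw [List.take_length, toFinset_map_deletions hm hstep hK, Finset.sdiff_self]
  · exact notMem_toFinset_map_take_additions hstep hnonrep hl
  · exact List.toFinset_map_take_add_one σs _ hl
  · exact fun t => mem_toFinset_map_take_additions_of_ssubset hcplx h0 hstep hl
  · exact mem_sdiff_toFinset_map_take_deletions hstep hnonrep hK hl
  · rw [List.toFinset_map_take_add_one σs _ hl, Finset.sdiff_insert]
  · exact fun s => eq_of_mem_sdiff_toFinset_map_take_deletions hcplx hm hstep hnonrep hK hl
end

section
/- Let F and F' be simplex-wise zigzag filtrations related by a Mayer–Vietoris diamond. Then the Diamond Principle bijection preserves the total number of intervals and preserves the multiset of (creator, destroyer) pairs of simplices: corresponding intervals have the same unordered pair consisting of the simplex event starting the interval and the simplex event ending it, with the roles of creator and destroyer swapped exactly when the interval is [j,j] in the upper filtration. -/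
/-- The Diamond Principle bijection on intervals, for a Mayer–Vietoris diamond
at index `j`. -/
def diamondMap (j : ℕ) (I : ℕ × ℕ) : ℕ × ℕ :=
  if I.1 = j ∧ I.2 = j then (j, j)
  else if I.2 = j - 1 then (I.1, j)
  else if I.2 = j then (I.1, j - 1)
  else if I.1 = j then (j + 1, I.2)
  else if I.1 = j + 1 then (j, I.2)
  else I

/-- For simplex-wise zigzag filtrations `F`, `F'` related by a Mayer–Vietoris
diamond at index `j` (`F` performs the event `ev (j-1) = ` add `σ` and then
`ev j = ` delete `τ`; `F'` performs them in the opposite order), the Diamond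
Principle bijection is an involution on intervals (hence preserves the total
number of intervals), and corresponding intervals have the same unordered pair
{creator, destroyer} of simplex events, with the roles of creator and
destroyer swapped exactly for the interval `[j, j]`. -/
theorem diamond_preserves_creator_destroyer {V : Type}
    (m j : ℕ) (hj : 1 ≤ j) (hjm : j + 1 ≤ m)
    (ev ev' : ℕ → Bool × Finset V) (σ τ : Finset V)
    (hσ : ev (j - 1) = (true, σ)) (hτ : ev j = (false, τ)) (hστ : σ ≠ τ)
    (h1 : ev' (j - 1) = ev j) (h2 : ev' j = ev (j - 1))
    (h3 : ∀ i, i ≠ j - 1 → i ≠ j → ev' i = ev i) :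
    (∀ b d, 1 ≤ b → b ≤ d → d < m →
      diamondMap j (diamondMap j (b, d)) = (b, d)) ∧
    (∀ b d, 1 ≤ b → b ≤ d → d < m → ¬(b = j ∧ d = j) →
      ev' ((diamondMap j (b, d)).1 - 1) = ev (b - 1) ∧
      ev' ((diamondMap j (b, d)).2) = ev d) ∧
    (ev' ((diamondMap j (j, j)).1 - 1) = ev j ∧
     ev' ((diamondMap j (j, j)).2) = ev (j - 1)) := by
  have ev00 : diamondMap j (j, j) = (j, j) := by
    simp [diamondMap]
  refine ⟨?_, ?_, ?_⟩
  · intro b d hb hbd hdm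
    by_cases hA : b = j ∧ d = j
    · rw [hA.1, hA.2, ev00, ev00]
    · by_cases hB : d = j - 1
      · have hbj : b ≠ j := by omega
        rw [hB,
          show diamondMap j (b, j - 1) = (b, j) by
            simp only [diamondMap]; split_ifs <;> first | rfl | (exfalso; omega),
          show diamondMap j (b, j) = (b, j - 1) by
            simp only [diamondMap]; split_ifs <;> first | rfl | (exfalso; omega)]
      · by_cases hC : d = j
        · have hbj : b ≠ j := fun h => hA ⟨h, hC⟩
          rw [hC,
            show diamondMap j (b, j) = (b, j - 1) by
              simp only [diamondMap]; split_ifs <;> first | rfl | (exfalso; omega),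
            show diamondMap j (b, j - 1) = (b, j) by
              simp only [diamondMap]; split_ifs <;> first | rfl | (exfalso; omega)]
        · by_cases hD : b = j
          · have hd : j < d := by omega
            rw [hD,
              show diamondMap j (j, d) = (j + 1, d) by
                simp only [diamondMap]; split_ifs <;> first | rfl | (exfalso; omega),
              show diamondMap j (j + 1, d) = (j, d) by
                simp only [diamondMap]; split_ifs <;> first | rfl | (exfalso; omega)]
          · by_cases hE : b = j + 1
            · have hd : j + 1 ≤ d := by omega
              rw [hE,
                show diamondMap j (j + 1, d) = (j, d) by
                  simp only [diamondMap]; split_ifs <;> first | rfl | (exfalso; omega),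
                show diamondMap j (j, d) = (j + 1, d) by
                  simp only [diamondMap]; split_ifs <;> first | rfl | (exfalso; omega)]
            · rw [show diamondMap j (b, d) = (b, d) by
                  simp only [diamondMap]; split_ifs <;> first | rfl | (exfalso; omega)]
              rw [show diamondMap j (b, d) = (b, d) by
                  simp only [diamondMap]; split_ifs <;> first | rfl | (exfalso; omega)]
  · intro b d hb hbd hdm hne
    by_cases hB : d = j - 1
    · have hbj : b ≠ j := by omega
      rw [show diamondMap j (b, d) = (b, j) by
        rw [hB]; simp only [diamondMap]; split_ifs <;> first | rfl | (exfalso; omega)]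
      refine ⟨h3 (b - 1) (by omega) (by omega), ?_⟩
      show ev' j = ev d
      rw [hB]; exact h2
    · by_cases hC : d = j
      · have hbj : b ≠ j := fun h => hne ⟨h, hC⟩
        rw [show diamondMap j (b, d) = (b, j - 1) by
          rw [hC]; simp only [diamondMap]; split_ifs <;> first | rfl | (exfalso; omega)]
        refine ⟨h3 (b - 1) (by omega) (by omega), ?_⟩
        show ev' (j - 1) = ev d
        rw [hC]; exact h1
      · by_cases hD : b = j
        · have hd : j < d := by omega
          rw [show diamondMap j (b, d) = (j + 1, d) by
            rw [hD]; simp only [diamondMap]; split_ifs <;> first | rfl | (exfalso; omega)]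
          refine ⟨?_, h3 d (by omega) (by omega)⟩
          show ev' j = ev (b - 1)
          rw [hD]; exact h2
        · by_cases hE : b = j + 1
          · have hd : j + 1 ≤ d := by omega
            rw [show diamondMap j (b, d) = (j, d) by
              rw [hE]; simp only [diamondMap]; split_ifs <;> first | rfl | (exfalso; omega)]
            refine ⟨?_, h3 d (by omega) (by omega)⟩
            show ev' (j - 1) = ev (b - 1)
            rw [hE]; exact h1
          · rw [show diamondMap j (b, d) = (b, d) by
              simp only [diamondMap]; split_ifs <;> first | rfl | (exfalso; omega)]
            exact ⟨h3 (b - 1) (by omega) (by omega), h3 d (by omega) (by omega)⟩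
  · rw [ev00]
    exact ⟨h1, h2⟩
end
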